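/- arXiv:2411.00318 — 5 statements merged into one kernel-verified Lean document; each statement's English description precedes it below -/
import Mathlib

section
/- For the cyclic reformulation of an M-periodic linear system, Ȟ(i) · S_m^i is block diagonal with l×m blocks for every i ≥ 0, and Ȟ(i) · S_m^{i-1} is a cyclic matrix for every i ≥ 1. -/
open Matrix

/-- Block cyclic shift matrix: block (i, i+1 mod M) equals I_q, zeros elsewhere. -/
def cycShift (M q : ℕ) [NeZero M] : Matrix (Fin M × Fin q) (Fin M × Fin q) ℝ :=
  fun a b => if b.1 = a.1 + 1 ∧ b.2 = a.2 then 1 else 0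

/-- Block diagonal: all off-diagonal p×q blocks vanish. -/
def IsBlockDiag {M p q : ℕ} (K : Matrix (Fin M × Fin p) (Fin M × Fin q) ℝ) : Prop :=
  ∀ i j : Fin M, i ≠ j → ∀ s t, K (i, s) (j, t) = 0

/-- Cyclic: the only possibly nonzero blocks are at positions ((j+1) mod M, j). -/
def IsCyclicMat {M p q : ℕ} [NeZero M] (K : Matrix (Fin M × Fin p) (Fin M × Fin q) ℝ) : Prop :=
  ∀ i j : Fin M, i ≠ j + 1 → ∀ s t, K (i, s) (j, t) = 0

/-- Cyclic matrix built from blocks `Bs j` placed at positions ((j+1) mod M, j). -/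
def cycOf {M p q : ℕ} [NeZero M] (Bs : Fin M → Matrix (Fin p) (Fin q) ℝ) :
    Matrix (Fin M × Fin p) (Fin M × Fin q) ℝ :=
  fun a b => if a.1 = b.1 + 1 then Bs b.1 a.2 b.2 else 0

/-- Block diagonal matrix built from diagonal blocks `Ds j`. -/
def bdiagOf {M p q : ℕ} (Ds : Fin M → Matrix (Fin p) (Fin q) ℝ) :
    Matrix (Fin M × Fin p) (Fin M × Fin q) ℝ :=
  fun a b => if a.1 = b.1 then Ds b.1 a.2 b.2 else 0

/-- Markov parameters of the cyclic reformulation. -/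
noncomputable def markovOf {M n m l : ℕ} [NeZero M] (As : Fin M → Matrix (Fin n) (Fin n) ℝ)
    (Bs : Fin M → Matrix (Fin n) (Fin m) ℝ) (Cs : Fin M → Matrix (Fin l) (Fin n) ℝ)
    (Ds : Fin M → Matrix (Fin l) (Fin m) ℝ) : ℕ → Matrix (Fin M × Fin l) (Fin M × Fin m) ℝ
  | 0 => bdiagOf Ds
  | (i + 1) => bdiagOf Cs * (cycOf As) ^ i * cycOf Bs

/-!
Index the block rows and columns by the group `ℤ/M`. Call a block matrix shifted by `k` when its
only nonzero blocks sit at positions `(j + k, j)`. Shifts add under multiplication, so block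
diagonal matrices have shift `0`, the cyclic `Ǎ, B̌` have shift `1` and `S_m` has shift `-1`.
Hence `Ȟ(i)` has shift `i`, `Ȟ(i) S_m^i` has shift `0` and `Ȟ(i) S_m^{i-1}` has shift `1`.
-/

section IsShifted

variable {G R α β γ : Type*} [AddCommGroup G]

def IsShifted [Zero R] (k : G) (K : Matrix (G × α) (G × β) R) : Prop :=
  ∀ i j : G, i ≠ j + k → ∀ s t, K (i, s) (j, t) = 0

theorem isShifted_one [DecidableEq G] [DecidableEq α] [Zero R] [One R] :
    IsShifted (0 : G) (1 : Matrix (G × α) (G × α) R) := by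
  intro i j h s t
  rw [add_zero] at h
  exact one_apply_ne fun he => h (congrArg Prod.fst he)

theorem IsShifted.mul [NonUnitalNonAssocSemiring R] [Fintype G] [Fintype β] {k k' : G}
    {K : Matrix (G × α) (G × β) R} {L : Matrix (G × β) (G × γ) R}
    (hK : IsShifted k K) (hL : IsShifted k' L) : IsShifted (k + k') (K * L) := by
  intro i j h s t
  refine Finset.sum_eq_zero fun ⟨c, u⟩ _ => ?_
  change K (i, s) (c, u) * L (c, u) (j, t) = 0
  by_cases hc : i = c + k
  · have hcj : c ≠ j + k' := by
      rintro rfl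
      exact h (by rw [hc, add_assoc, add_comm k'])
    rw [hL c j hcj, mul_zero]
  · rw [hK i c hc, zero_mul]

theorem IsShifted.pow [DecidableEq G] [DecidableEq α] [Semiring R] [Fintype G] [Fintype α]
    {k : G} {K : Matrix (G × α) (G × α) R} (hK : IsShifted k K) (i : ℕ) :
    IsShifted (i • k) (K ^ i) := by
  induction i with
  | zero => simpa only [pow_zero, zero_smul] using isShifted_one
  | succ i ih => simpa only [pow_succ, succ_nsmul] using ih.mul hK

end IsShifted

section CyclicReformulation

variable {M p q : ℕ} [NeZero M]

theorem isShifted_zero_iff_isBlockDiag {K : Matrix (Fin M × Fin p) (Fin M × Fin q) ℝ} :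
    IsShifted 0 K ↔ IsBlockDiag K := by
  simp only [IsShifted, IsBlockDiag, add_zero]

theorem isShifted_one_iff_isCyclicMat {K : Matrix (Fin M × Fin p) (Fin M × Fin q) ℝ} :
    IsShifted 1 K ↔ IsCyclicMat K :=
  Iff.rfl

theorem isShifted_bdiagOf (Ds : Fin M → Matrix (Fin p) (Fin q) ℝ) : IsShifted 0 (bdiagOf Ds) := by
  intro i j h s t
  rw [add_zero] at h
  simp [bdiagOf, h]

theorem isShifted_cycOf (Bs : Fin M → Matrix (Fin p) (Fin q) ℝ) : IsShifted 1 (cycOf Bs) := by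
  intro i j h s t
  simp [cycOf, h]

theorem isShifted_cycShift : IsShifted (-1) (cycShift M q) := by
  intro i j h s t
  simp only [cycShift, ite_eq_right_iff, and_imp]
  rintro rfl -
  exact absurd (add_neg_cancel_right i 1).symm h

theorem isShifted_markovOf {n m l : ℕ} (As : Fin M → Matrix (Fin n) (Fin n) ℝ)
    (Bs : Fin M → Matrix (Fin n) (Fin m) ℝ) (Cs : Fin M → Matrix (Fin l) (Fin n) ℝ)
    (Ds : Fin M → Matrix (Fin l) (Fin m) ℝ) (i : ℕ) :
    IsShifted (i • 1) (markovOf As Bs Cs Ds i) := by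
  cases i with
  | zero => simpa only [zero_smul, markovOf] using isShifted_bdiagOf Ds
  | succ i =>
    have h := ((isShifted_bdiagOf Cs).mul ((isShifted_cycOf As).pow i)).mul (isShifted_cycOf Bs)
    rwa [zero_add, ← succ_nsmul] at h

end CyclicReformulation

theorem stmt8 (M n m l : ℕ) [NeZero M] (As : Fin M → Matrix (Fin n) (Fin n) ℝ)
    (Bs : Fin M → Matrix (Fin n) (Fin m) ℝ) (Cs : Fin M → Matrix (Fin l) (Fin n) ℝ)
    (Ds : Fin M → Matrix (Fin l) (Fin m) ℝ) :
    (∀ i : ℕ, IsBlockDiag (markovOf As Bs Cs Ds i * (cycShift M m) ^ i)) ∧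
    (∀ i : ℕ, IsCyclicMat (markovOf As Bs Cs Ds (i + 1) * (cycShift M m) ^ i)) := by
  have hH := isShifted_markovOf As Bs Cs Ds
  have hS := (isShifted_cycShift (M := M) (q := m)).pow
  refine ⟨fun i => ?_, fun i => ?_⟩
  · rw [← isShifted_zero_iff_isBlockDiag]
    simpa only [smul_neg, add_neg_cancel] using (hH i).mul (hS i)
  · rw [← isShifted_one_iff_isCyclicMat]
    simpa only [succ_nsmul, smul_neg, add_neg_cancel_comm] using (hH (i + 1)).mul (hS i)
end

section
/- For the cyclic reformulation of an M-periodic linear system, S_l^i · Ȟ(i+j) · S_m^j is block diagonal with l×m blocks for all i, j ≥ 0, and S_l^i · Ȟ(i+j) · S_m^{j-1} is a cyclic matrix for all i ≥ 0 and j ≥ 1. -/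
open Matrix

/-!
Call a matrix indexed by `G × α` and `G × β` a block shift by `c : G` if its block `(a, b)`
vanishes unless `a = c + b`. Block shifts add under multiplication. Over `G = Fin M`, the block
diagonal matrices `Č`, `Ď` are shifts by `0`, the cyclic matrices `Ǎ`, `B̌` shifts by `1` and `S`
a shift by `-1`; hence `S_l^i Ȟ(k) S_m^j` is a shift by `k - i - j`, which is `0` for `k = i + j`
and `1` for `k = i + j + 1`.
-/

open scoped Fin.NatCast Fin.CommRing

def IsBlockShift {G α β R : Type*} [Add G] [Zero R] (c : G) (K : Matrix (G × α) (G × β) R) :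
    Prop :=
  ∀ a b, a.1 ≠ c + b.1 → K a b = 0

namespace IsBlockShift

variable {G α β γ R : Type*}

theorem mul [Fintype G] [AddSemigroup G] [Fintype β] [NonUnitalNonAssocSemiring R] {c d : G}
    {K : Matrix (G × α) (G × β) R} {L : Matrix (G × β) (G × γ) R}
    (hK : IsBlockShift c K) (hL : IsBlockShift d L) : IsBlockShift (c + d) (K * L) := by
  intro a b hab
  rw [Matrix.mul_apply]
  refine Finset.sum_eq_zero fun x _ => ?_
  by_cases hx : a.1 = c + x.1
  · have hxb : x.1 ≠ d + b.1 := fun h => hab (by rw [hx, h, add_assoc])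
    rw [hL x b hxb, mul_zero]
  · rw [hK a x hx, zero_mul]

theorem one [DecidableEq G] [DecidableEq α] [AddZeroClass G] [Zero R] [One R] :
    IsBlockShift (0 : G) (1 : Matrix (G × α) (G × α) R) := fun a b hab =>
  Matrix.one_apply_ne fun h => hab (by rw [h, zero_add])

theorem pow [Fintype G] [DecidableEq G] [Fintype α] [DecidableEq α] [AddMonoid G] [Semiring R]
    {c : G} {K : Matrix (G × α) (G × α) R}
    (hK : IsBlockShift c K) (n : ℕ) : IsBlockShift (n • c) (K ^ n) := by
  induction n with
  | zero => simpa using one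
  | succ n ih => simpa [pow_succ, succ_nsmul] using ih.mul hK

end IsBlockShift

section CyclicReformulation

variable {M p q : ℕ} [NeZero M]

theorem isBlockShift_bdiagOf (Ds : Fin M → Matrix (Fin p) (Fin q) ℝ) :
    IsBlockShift (0 : Fin M) (bdiagOf Ds) := fun a b hab =>
  if_neg fun h => hab (by rw [h, zero_add])

theorem isBlockShift_cycOf (Bs : Fin M → Matrix (Fin p) (Fin q) ℝ) :
    IsBlockShift (1 : Fin M) (cycOf Bs) := fun _ _ hab =>
  if_neg fun h => hab (h.trans (add_comm _ _))

theorem isBlockShift_cycShift : IsBlockShift (-1 : Fin M) (cycShift M q) := fun a b hab =>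
  if_neg fun h => hab (by rw [h.1]; ring)

theorem isBlockShift_cycShift_pow (i : ℕ) :
    IsBlockShift (-(i : Fin M)) (cycShift M q ^ i) := by
  simpa using (isBlockShift_cycShift (M := M) (q := q)).pow i

theorem isBlockShift_markovOf {n m l : ℕ} (As : Fin M → Matrix (Fin n) (Fin n) ℝ)
    (Bs : Fin M → Matrix (Fin n) (Fin m) ℝ) (Cs : Fin M → Matrix (Fin l) (Fin n) ℝ)
    (Ds : Fin M → Matrix (Fin l) (Fin m) ℝ) (k : ℕ) :
    IsBlockShift (k : Fin M) (markovOf As Bs Cs Ds k) := by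
  cases k with
  | zero => simpa [markovOf] using isBlockShift_bdiagOf Ds
  | succ i =>
    rw [markovOf]
    simpa [add_comm] using
      ((isBlockShift_bdiagOf Cs).mul ((isBlockShift_cycOf As).pow i)).mul (isBlockShift_cycOf Bs)

theorem IsBlockShift.isBlockDiag {K : Matrix (Fin M × Fin p) (Fin M × Fin q) ℝ}
    (hK : IsBlockShift 0 K) : IsBlockDiag K := fun i j hij s t =>
  hK (i, s) (j, t) (by simpa using hij)

theorem IsBlockShift.isCyclicMat {K : Matrix (Fin M × Fin p) (Fin M × Fin q) ℝ}
    (hK : IsBlockShift 1 K) : IsCyclicMat K := fun i j hij s t =>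
  hK (i, s) (j, t) fun h => hij (h.trans (add_comm _ _))

end CyclicReformulation

theorem stmt9 (M n m l : ℕ) [NeZero M] (As : Fin M → Matrix (Fin n) (Fin n) ℝ)
    (Bs : Fin M → Matrix (Fin n) (Fin m) ℝ) (Cs : Fin M → Matrix (Fin l) (Fin n) ℝ)
    (Ds : Fin M → Matrix (Fin l) (Fin m) ℝ) :
    (∀ i j : ℕ, IsBlockDiag
        ((cycShift M l) ^ i * markovOf As Bs Cs Ds (i + j) * (cycShift M m) ^ j)) ∧
    (∀ i j : ℕ, IsCyclicMat
        ((cycShift M l) ^ i * markovOf As Bs Cs Ds (i + (j + 1)) * (cycShift M m) ^ j)) := by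
  have shift (i j k : ℕ) :
      IsBlockShift (-(i : Fin M) + k + -(j : Fin M))
        ((cycShift M l) ^ i * markovOf As Bs Cs Ds k * (cycShift M m) ^ j) :=
    ((isBlockShift_cycShift_pow i).mul (isBlockShift_markovOf As Bs Cs Ds k)).mul
      (isBlockShift_cycShift_pow j)
  refine ⟨fun i j => IsBlockShift.isBlockDiag ?_, fun i j => IsBlockShift.isCyclicMat ?_⟩
  · convert shift i j (i + j) using 1
    push_cast; ring
  · convert shift i j (i + (j + 1)) using 1
    push_cast; ring
end

section
/- If T ∈ R^{Mn×Mn} is invertible and transforms a system (A*, B*, C*, D*) into cyclic form (i.e., T^{-1} A* T and T^{-1} B* are cyclic, C* T and D* are block diagonal), then for any block diagonal invertible Φ ∈ R^{Mn×Mn} (with n×n blocks), the matrix TΦ also transforms the system into cyclic form: (TΦ)^{-1} A* (TΦ) and (TΦ)^{-1} B* are cyclic, and C* (TΦ) is block diagonal. -/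
open Matrix

/-! Multiplying by a block diagonal matrix on either side preserves both the cyclic and the
block diagonal pattern, and the inverse of a block diagonal matrix is block diagonal (it is block
upper and block lower triangular). So `(TΦ)⁻¹ A* (TΦ) = Φ⁻¹ (T⁻¹ A* T) Φ`, `(TΦ)⁻¹ B* = Φ⁻¹ (T⁻¹ B*)`
and `C* (TΦ) = (C* T) Φ` keep their shapes. -/

variable {M p q r : ℕ}

theorem IsBlockDiag.mul {P : Matrix (Fin M × Fin p) (Fin M × Fin q) ℝ}
    {Q : Matrix (Fin M × Fin q) (Fin M × Fin r) ℝ} (hP : IsBlockDiag P) (hQ : IsBlockDiag Q) :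
    IsBlockDiag (P * Q) := by
  intro i j hij s t
  rw [Matrix.mul_apply]
  refine Finset.sum_eq_zero fun ⟨k, u⟩ _ => ?_
  by_cases hk : k = j
  · subst hk; rw [hP _ _ hij, zero_mul]
  · rw [hQ _ _ hk, mul_zero]

theorem IsBlockDiag.mul_isCyclicMat [NeZero M] {P : Matrix (Fin M × Fin p) (Fin M × Fin q) ℝ}
    {Q : Matrix (Fin M × Fin q) (Fin M × Fin r) ℝ} (hP : IsBlockDiag P) (hQ : IsCyclicMat Q) :
    IsCyclicMat (P * Q) := by
  intro i j hij s t
  rw [Matrix.mul_apply]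
  refine Finset.sum_eq_zero fun ⟨k, u⟩ _ => ?_
  by_cases hk : k = i
  · subst hk; rw [hQ _ _ hij, mul_zero]
  · rw [hP i k (Ne.symm hk), zero_mul]

theorem IsCyclicMat.mul_isBlockDiag [NeZero M] {P : Matrix (Fin M × Fin p) (Fin M × Fin q) ℝ}
    {Q : Matrix (Fin M × Fin q) (Fin M × Fin r) ℝ} (hP : IsCyclicMat P) (hQ : IsBlockDiag Q) :
    IsCyclicMat (P * Q) := by
  intro i j hij s t
  rw [Matrix.mul_apply]
  refine Finset.sum_eq_zero fun ⟨k, u⟩ _ => ?_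
  by_cases hk : k = j
  · subst hk; rw [hP _ _ hij, zero_mul]
  · rw [hQ _ _ hk, mul_zero]

theorem isBlockDiag_iff_blockTriangular {K : Matrix (Fin M × Fin p) (Fin M × Fin p) ℝ} :
    IsBlockDiag K ↔
      K.BlockTriangular Prod.fst ∧ K.BlockTriangular (OrderDual.toDual ∘ Prod.fst) := by
  refine ⟨fun h => ⟨fun ⟨a, s⟩ ⟨b, t⟩ hab => h a b hab.ne' s t,
    fun ⟨a, s⟩ ⟨b, t⟩ hab => h a b (OrderDual.toDual_lt_toDual.mp hab).ne s t⟩,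
    fun ⟨hlow, hup⟩ i j hij s t => ?_⟩
  rcases hij.lt_or_gt with hij | hij
  · exact hup (i := (i, s)) (j := (j, t)) hij
  · exact hlow (i := (i, s)) (j := (j, t)) hij

theorem IsBlockDiag.inv {Φ : Matrix (Fin M × Fin p) (Fin M × Fin p) ℝ} (h : IsBlockDiag Φ)
    (hΦ : IsUnit Φ) : IsBlockDiag Φ⁻¹ := by
  let := hΦ.invertible
  rw [isBlockDiag_iff_blockTriangular] at h ⊢
  exact ⟨blockTriangular_inv_of_blockTriangular h.1, blockTriangular_inv_of_blockTriangular h.2⟩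

theorem stmt15_general (M n m l : ℕ) [NeZero M]
    (Astar : Matrix (Fin M × Fin n) (Fin M × Fin n) ℝ)
    (Bstar : Matrix (Fin M × Fin n) (Fin M × Fin m) ℝ)
    (Cstar : Matrix (Fin M × Fin l) (Fin M × Fin n) ℝ)
    (T : Matrix (Fin M × Fin n) (Fin M × Fin n) ℝ)
    (hA : IsCyclicMat (T⁻¹ * Astar * T)) (hB : IsCyclicMat (T⁻¹ * Bstar))
    (hC : IsBlockDiag (Cstar * T))
    (Φ : Matrix (Fin M × Fin n) (Fin M × Fin n) ℝ)
    (hΦd : IsBlockDiag Φ) (hΦ : IsUnit Φ) :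
    IsCyclicMat ((T * Φ)⁻¹ * Astar * (T * Φ)) ∧
    IsCyclicMat ((T * Φ)⁻¹ * Bstar) ∧
    IsBlockDiag (Cstar * (T * Φ)) := by
  have hΦi := hΦd.inv hΦ
  rw [Matrix.mul_inv_rev]
  refine ⟨?_, ?_, ?_⟩
  · rw [show Φ⁻¹ * T⁻¹ * Astar * (T * Φ) = Φ⁻¹ * (T⁻¹ * Astar * T) * Φ by
      simp only [Matrix.mul_assoc]]
    exact (hΦi.mul_isCyclicMat hA).mul_isBlockDiag hΦd
  · rw [Matrix.mul_assoc]
    exact hΦi.mul_isCyclicMat hB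
  · rw [← Matrix.mul_assoc]
    exact hC.mul hΦd

theorem stmt15 (M n m l : ℕ) [NeZero M]
    (Astar : Matrix (Fin M × Fin n) (Fin M × Fin n) ℝ)
    (Bstar : Matrix (Fin M × Fin n) (Fin M × Fin m) ℝ)
    (Cstar : Matrix (Fin M × Fin l) (Fin M × Fin n) ℝ)
    (Dstar : Matrix (Fin M × Fin l) (Fin M × Fin m) ℝ)
    (T : Matrix (Fin M × Fin n) (Fin M × Fin n) ℝ) (hT : IsUnit T)
    (hA : IsCyclicMat (T⁻¹ * Astar * T)) (hB : IsCyclicMat (T⁻¹ * Bstar))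
    (hC : IsBlockDiag (Cstar * T)) (hD : IsBlockDiag Dstar)
    (Φ : Matrix (Fin M × Fin n) (Fin M × Fin n) ℝ)
    (hΦd : IsBlockDiag Φ) (hΦ : IsUnit Φ) :
    IsCyclicMat ((T * Φ)⁻¹ * Astar * (T * Φ)) ∧
    IsCyclicMat ((T * Φ)⁻¹ * Bstar) ∧
    IsBlockDiag (Cstar * (T * Φ)) :=
  stmt15_general M n m l Astar Bstar Cstar T hA hB hC Φ hΦd hΦ
end

section
/- For the cyclic reformulation, the block observability-type matrix identity holds: Σ_{j=1}^{n} F̌_j S_l^{j-1} Č Ǎ^{j-1} = diag(X_0, X_1, ..., X_{M-1}), where X_k = F · col(C_{k mod M}, C_{(k+1) mod M} A_{k mod M}, ..., C_{(k+n-1) mod M} A_{(k+n-2) mod M}···A_{k mod M}) and F = [F_1 F_2 ... F_n]. -/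
open Matrix
open Fin.NatCast

/-- Product A_{k+j-1} A_{k+j-2} ··· A_k (j factors). -/
noncomputable def prodA {M n : ℕ} [NeZero M] (As : Fin M → Matrix (Fin n) (Fin n) ℝ)
    (k : Fin M) (j : ℕ) : Matrix (Fin n) (Fin n) ℝ :=
  (((List.range j).map (fun t => As (k + ((j - 1 - t : ℕ) : Fin M)))).prod)

/-! Every matrix in the identity is a block shift matrix over the cyclic group `Fin M`: block
column `k` holds a single block, in block row `k + d`. Such matrices multiply by adding their
shifts, so `F̌_j S_l^j Č Ǎ^j` has shift `-j + j = 0`, i.e. it is block diagonal, with `k`-th block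
`F_j C_{k+j} A_{k+j-1} ⋯ A_k`. -/

section BlockShift

variable {G R m n o : Type*} [AddGroup G] [DecidableEq G]

def blockShift [Zero R] (d : G) (B : G → Matrix m n R) : Matrix (G × m) (G × n) R :=
  fun a b => if a.1 = b.1 + d then B b.1 a.2 b.2 else 0

theorem blockShift_mul_blockShift [Fintype G] [Fintype n] [NonUnitalNonAssocSemiring R]
    (d e : G) (B : G → Matrix m n R) (C : G → Matrix n o R) :
    blockShift d B * blockShift e C = blockShift (e + d) (fun k => B (k + e) * C k) := by
  ext ⟨i, s⟩ ⟨b, t⟩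
  simp only [blockShift, mul_apply, Fintype.sum_prod_type, ite_mul, mul_ite, zero_mul, mul_zero]
  rw [Finset.sum_eq_single (b + e) (fun x _ hx => by simp [hx]) (by simp)]
  simp [add_assoc]

theorem blockShift_zero_one [DecidableEq m] [Zero R] [One R] :
    blockShift (0 : G) (fun _ => (1 : Matrix m m R)) = 1 := by
  ext ⟨i, s⟩ ⟨b, t⟩
  simp [blockShift, one_apply, Prod.ext_iff, ite_and]

theorem blockShift_const_pow [Fintype G] [Fintype m] [DecidableEq m] [Semiring R]
    (d : G) (B : Matrix m m R) (j : ℕ) :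
    blockShift d (fun _ => B) ^ j = blockShift (j • d) (fun _ => B ^ j) := by
  induction j with
  | zero => simp [blockShift_zero_one]
  | succ j ih => rw [pow_succ, ih, blockShift_mul_blockShift, succ_nsmul', pow_succ]

theorem blockShift_sum [AddCommMonoid R] {ι : Type*} (s : Finset ι) (d : G)
    (B : ι → G → Matrix m n R) :
    ∑ j ∈ s, blockShift d (B j) = blockShift d (fun k => ∑ j ∈ s, B j k) := by
  ext ⟨i, u⟩ ⟨b, t⟩
  simp only [blockShift, Matrix.sum_apply]
  split_ifs <;> simp

end BlockShift

section CyclicReformulation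

variable {M p q : ℕ} [NeZero M]

theorem bdiagOf_eq_blockShift (Ds : Fin M → Matrix (Fin p) (Fin q) ℝ) :
    bdiagOf Ds = blockShift 0 Ds := by
  ext ⟨i, s⟩ ⟨b, t⟩
  simp [bdiagOf, blockShift]

theorem cycOf_eq_blockShift (Bs : Fin M → Matrix (Fin p) (Fin q) ℝ) :
    cycOf Bs = blockShift 1 Bs := rfl

theorem cycShift_eq_blockShift :
    cycShift M q = blockShift (-1) (fun _ => (1 : Matrix (Fin q) (Fin q) ℝ)) := by
  ext ⟨i, s⟩ ⟨b, t⟩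
  simp [cycShift, blockShift, one_apply, ite_and, eq_add_neg_iff_add_eq, eq_comm]

theorem prodA_succ (As : Fin M → Matrix (Fin p) (Fin p) ℝ) (k : Fin M) (j : ℕ) :
    prodA As k (j + 1) = As (k + j) * prodA As k j := by
  simp only [prodA, List.range_succ_eq_map, List.map_cons, List.map_map, List.prod_cons]
  congr 3
  funext t
  simp only [Function.comp_apply]
  congr 3
  omega

theorem cycOf_pow (As : Fin M → Matrix (Fin p) (Fin p) ℝ) (j : ℕ) :
    cycOf As ^ j = blockShift (j : Fin M) (fun k => prodA As k j) := by
  induction j with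
  | zero => simp [prodA, blockShift_zero_one]
  | succ j ih =>
    rw [pow_succ', ih, cycOf_eq_blockShift, blockShift_mul_blockShift]
    simp only [prodA_succ, Nat.cast_succ]

end CyclicReformulation

theorem stmt16 (M n l : ℕ) [NeZero M]
    (As : Fin M → Matrix (Fin n) (Fin n) ℝ) (Cs : Fin M → Matrix (Fin l) (Fin n) ℝ)
    (Fs : Fin n → Matrix (Fin n) (Fin l) ℝ) :
    (∑ j : Fin n,
        bdiagOf (fun _ : Fin M => Fs j) * (cycShift M l) ^ (j : ℕ) * bdiagOf Cs * (cycOf As) ^ (j : ℕ))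
      = bdiagOf (fun k : Fin M =>
          ∑ j : Fin n, Fs j * (Cs (k + ((j : ℕ) : Fin M)) * prodA As k (j : ℕ))) := by
  have term (j : Fin n) :
      bdiagOf (fun _ : Fin M => Fs j) * (cycShift M l) ^ (j : ℕ) * bdiagOf Cs * (cycOf As) ^ (j : ℕ)
        = blockShift 0 (fun k => Fs j * (Cs (k + ((j : ℕ) : Fin M)) * prodA As k (j : ℕ))) := by
    simp only [bdiagOf_eq_blockShift, cycShift_eq_blockShift, blockShift_const_pow, cycOf_pow,
      blockShift_mul_blockShift, one_pow, Matrix.mul_one, Matrix.mul_assoc, add_zero, zero_add,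
      smul_neg, nsmul_one, add_neg_cancel]
  rw [Finset.sum_congr rfl fun j _ => term j, blockShift_sum, bdiagOf_eq_blockShift]
end

section
/- For the cyclic matrix Ǎ with blocks A_0,...,A_{M-1}, the characteristic polynomial of Ǎ evaluated in λ^M satisfies: det(λ^M I_{Mn} − Ǎ^M) = Π_{i=0}^{M-1} det(λ^M I_n − Ψ_i), where Ψ_i = A_{(i-1) mod M}···A_{i mod M} is the monodromy matrix at phase i; in particular the eigenvalues of Ǎ^M are the eigenvalues of the M monodromy matrices combined. -/
/-!
The `k`-th power of a block-cyclic matrix is again supported on a single block "diagonal",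
the blocks `(j + k, j)`, where it carries the partial product `A_{j+k-1} ⋯ A_j`. For `k = M`
this diagonal is the main one and the blocks are the monodromy matrices `Ψ_j`, so
`λ^M I - Ǎ^M` is block diagonal with blocks `λ^M I - Ψ_j` and its determinant factors.
-/

open Matrix

/-- Phase-i monodromy matrix Ψ_i = A_{i+M-1} A_{i+M-2} ··· A_i. -/
noncomputable def monodromy {M n : ℕ} [NeZero M] (As : Fin M → Matrix (Fin n) (Fin n) ℝ)
    (i : Fin M) : Matrix (Fin n) (Fin n) ℝ :=
  (((List.range M).map (fun k => As (i + Fin.ofNat M (M - 1 - k : ℕ)))).prod)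

open Fin.NatCast

noncomputable def partialMonodromy {M n : ℕ} [NeZero M] (As : Fin M → Matrix (Fin n) (Fin n) ℝ)
    (k : ℕ) (j : Fin M) : Matrix (Fin n) (Fin n) ℝ :=
  ((List.range k).map (fun l => As (j + ((k - 1 - l : ℕ) : Fin M)))).prod

namespace partialMonodromy
variable {M n : ℕ} [NeZero M] (As : Fin M → Matrix (Fin n) (Fin n) ℝ)

theorem succ (k : ℕ) (j : Fin M) :
    partialMonodromy As (k + 1) j = As (j + k) * partialMonodromy As k j := by
  rw [partialMonodromy, List.range_succ_eq_map, List.map_cons, List.prod_cons, List.map_map]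
  have hk : k + 1 - 1 - 0 = k := by omega
  have hl : ∀ l, k + 1 - 1 - (l + 1) = k - 1 - l := fun l => by omega
  simp only [hk, hl, Function.comp_def]
  rfl

theorem zero (j : Fin M) : partialMonodromy As 0 j = 1 := rfl

theorem card_eq_monodromy : partialMonodromy As M = monodromy As := rfl
end partialMonodromy

section
variable {M n : ℕ}

theorem cycOf_pow_apply [NeZero M] (As : Fin M → Matrix (Fin n) (Fin n) ℝ) (k : ℕ) (a b : Fin M × Fin n) :
    (cycOf As ^ k) a b = if a.1 = b.1 + k then partialMonodromy As k b.1 a.2 b.2 else 0 := by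
  induction k generalizing a with
  | zero =>
    obtain ⟨i, s⟩ := a
    obtain ⟨j, t⟩ := b
    simp [partialMonodromy.zero, one_apply, Prod.ext_iff, ite_and]
  | succ k ih =>
    obtain ⟨i, s⟩ := a
    obtain ⟨j, t⟩ := b
    rw [pow_succ', mul_apply, Fintype.sum_prod_type]
    simp only [cycOf, ih, ite_mul, zero_mul, mul_ite, mul_zero]
    rw [Finset.sum_eq_single (j + (k : Fin M)) (fun c _ hc => by simp [hc]) (by simp)]
    simp only [if_true, Nat.cast_succ, ← add_assoc]
    split_ifs <;> simp [partialMonodromy.succ, mul_apply]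

theorem bdiagOf_eq_submatrix_blockDiagonal {p q : ℕ} (Ds : Fin M → Matrix (Fin p) (Fin q) ℝ) :
    bdiagOf Ds = (blockDiagonal Ds).submatrix (Equiv.prodComm _ _) (Equiv.prodComm _ _) := by
  ext ⟨i, s⟩ ⟨j, t⟩
  simp only [bdiagOf, submatrix_apply, Equiv.prodComm_apply, Prod.swap, blockDiagonal_apply]
  split_ifs <;> simp_all

theorem det_bdiagOf (Ds : Fin M → Matrix (Fin n) (Fin n) ℝ) :
    (bdiagOf Ds).det = ∏ i, (Ds i).det := by
  rw [bdiagOf_eq_submatrix_blockDiagonal, det_submatrix_equiv_self, det_blockDiagonal]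

theorem smul_one_sub_bdiagOf (c : ℝ) (Ds : Fin M → Matrix (Fin n) (Fin n) ℝ) :
    c • 1 - bdiagOf Ds = bdiagOf (fun i => c • 1 - Ds i) := by
  ext ⟨i, s⟩ ⟨j, t⟩
  by_cases h : i = j <;> simp [bdiagOf, one_apply, h]

theorem cycOf_pow_card [NeZero M] (As : Fin M → Matrix (Fin n) (Fin n) ℝ) :
    cycOf As ^ M = bdiagOf (monodromy As) := by
  ext a b
  rw [cycOf_pow_apply, Fin.natCast_self, add_zero, partialMonodromy.card_eq_monodromy]
  rfl
end

theorem stmt18 (M n : ℕ) [NeZero M] (As : Fin M → Matrix (Fin n) (Fin n) ℝ) (lam : ℝ) :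
    Matrix.det (lam ^ M • (1 : Matrix (Fin M × Fin n) (Fin M × Fin n) ℝ) - (cycOf As) ^ M)
      = ∏ i : Fin M,
          Matrix.det (lam ^ M • (1 : Matrix (Fin n) (Fin n) ℝ) - monodromy As i) := by
  rw [cycOf_pow_card, smul_one_sub_bdiagOf, det_bdiagOf]
end
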